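/- arXiv:2202.03535 — 2 statements merged into one kernel-verified Lean document; each statement's English description precedes it below -/
import Mathlib

section
/- Let $x^* \in \mathbb{R}^d$ be a unit vector, $\Gamma_{\mathrm{sym}} \in \mathbb{R}^{d\times d}$ symmetric, $X \in \mathbb{R}^{d\times d}$, and set $E = (\mathrm{Id} - x^* x^{*\top}) X$, $Z = x^* (X^\top x^*)^\top$ so that $X = Z + E$. Then $\langle E, (X X^\top - x^* x^{*\top} - \Gamma_{\mathrm{sym}}) X \rangle \ge -\|\Gamma_{\mathrm{sym}}\|_2 \|E\|_F^2 + \|E Z^\top\|_F^2 - \|\Gamma_{\mathrm{sym}}\|_2 \|E Z^\top\|_F \ge -\|\Gamma_{\mathrm{sym}}\|_2 \|E\|_F^2 - \frac{1}{4}\|\Gamma_{\mathrm{sym}}\|_2^2$, where $\langle A, B\rangle = \mathrm{tr}(A^\top B)$ and $\|\cdot\|_2$ is the spectral norm. -/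
/-! With `P = x* x*ᵀ` (an orthogonal projector, since `‖x*‖ = 1`), `E = (1 - P) X` and `Z = P X`
satisfy `Eᵀ P = 0` and `Eᵀ Z = 0`, so the pairing expands to
`‖EᵀE‖_F² + ‖EZᵀ‖_F² - ⟨E, ΓE⟩ - ⟨EZᵀ, ΓP⟩`; the last term arises from `Z = P Z`.
Cauchy–Schwarz together with `‖M B‖_F ≤ ‖M‖₂ ‖B‖_F` bounds the two `Γ`-terms by
`‖Γ‖₂ ‖E‖_F²` and `‖Γ‖₂ ‖EZᵀ‖_F ‖P‖_F = ‖Γ‖₂ ‖EZᵀ‖_F`. The second inequality is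
`t² - b t ≥ -b²/4`. -/

open Matrix MeasureTheory

noncomputable def frobSq {d : ℕ} (A : Matrix (Fin d) (Fin d) ℝ) : ℝ := ∑ i, ∑ j, (A i j) ^ 2

noncomputable def frobNorm {d : ℕ} (A : Matrix (Fin d) (Fin d) ℝ) : ℝ := Real.sqrt (frobSq A)

noncomputable def nsq {d : ℕ} (v : Fin d → ℝ) : ℝ := ∑ i, (v i) ^ 2

noncomputable def vnorm {d : ℕ} (v : Fin d → ℝ) : ℝ := Real.sqrt (nsq v)

noncomputable def specNorm {d : ℕ} (A : Matrix (Fin d) (Fin d) ℝ) : ℝ :=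
  ‖Matrix.toEuclideanCLM (𝕜 := ℝ) A‖

noncomputable def finner {d : ℕ} (A B : Matrix (Fin d) (Fin d) ℝ) : ℝ := Matrix.trace (Aᵀ * B)

section

variable {d : ℕ}

lemma nsq_eq_dotProduct (v : Fin d → ℝ) : nsq v = v ⬝ᵥ v := by
  simp only [nsq, dotProduct, sq]

lemma nsq_eq_norm_toLp_sq (v : Fin d → ℝ) : nsq v = ‖WithLp.toLp 2 v‖ ^ 2 := by
  simp [nsq, EuclideanSpace.norm_sq_eq]

lemma specNorm_nonneg (M : Matrix (Fin d) (Fin d) ℝ) : 0 ≤ specNorm M :=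
  norm_nonneg _

lemma nsq_mulVec_le (M : Matrix (Fin d) (Fin d) ℝ) (v : Fin d → ℝ) :
    nsq (M *ᵥ v) ≤ specNorm M ^ 2 * nsq v := by
  rw [nsq_eq_norm_toLp_sq, nsq_eq_norm_toLp_sq, ← mul_pow, ← Matrix.toEuclideanCLM_toLp]
  exact pow_le_pow_left₀ (norm_nonneg _) (ContinuousLinearMap.le_opNorm _ _) 2

lemma frobSq_nonneg (A : Matrix (Fin d) (Fin d) ℝ) : 0 ≤ frobSq A := by
  unfold frobSq; positivity

lemma frobNorm_sq (A : Matrix (Fin d) (Fin d) ℝ) : frobNorm A ^ 2 = frobSq A :=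
  Real.sq_sqrt (frobSq_nonneg A)

lemma frobSq_eq_sum_nsq_col (A : Matrix (Fin d) (Fin d) ℝ) : frobSq A = ∑ j, nsq (Aᵀ j) := by
  rw [frobSq, Finset.sum_comm]; rfl

lemma frobSq_mul_le (M B : Matrix (Fin d) (Fin d) ℝ) :
    frobSq (M * B) ≤ specNorm M ^ 2 * frobSq B := by
  rw [frobSq_eq_sum_nsq_col, frobSq_eq_sum_nsq_col, Finset.mul_sum]
  exact Finset.sum_le_sum fun j _ => nsq_mulVec_le M (Bᵀ j)

lemma frobNorm_mul_le (M B : Matrix (Fin d) (Fin d) ℝ) :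
    frobNorm (M * B) ≤ specNorm M * frobNorm B :=
  calc frobNorm (M * B) ≤ √(specNorm M ^ 2 * frobSq B) := Real.sqrt_le_sqrt (frobSq_mul_le M B)
    _ = specNorm M * frobNorm B := by
      rw [Real.sqrt_mul (sq_nonneg _), Real.sqrt_sq (specNorm_nonneg M), frobNorm]

lemma finner_eq_sum (A B : Matrix (Fin d) (Fin d) ℝ) :
    finner A B = ∑ i, ∑ j, A i j * B i j := by
  rw [finner, Matrix.trace, Finset.sum_comm]
  rfl

lemma finner_self (A : Matrix (Fin d) (Fin d) ℝ) : finner A A = frobSq A := by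
  simp only [finner_eq_sum, frobSq, sq]

lemma finner_le (A B : Matrix (Fin d) (Fin d) ℝ) :
    finner A B ≤ frobNorm A * frobNorm B := by
  simp only [finner_eq_sum, frobNorm, frobSq, ← Fintype.sum_prod_type']
  exact Real.sum_mul_le_sqrt_mul_sqrt _ _ _

lemma finner_mul_le (A M B : Matrix (Fin d) (Fin d) ℝ) :
    finner A (M * B) ≤ specNorm M * frobNorm A * frobNorm B := by
  calc finner A (M * B) ≤ frobNorm A * frobNorm (M * B) := finner_le A (M * B)
    _ ≤ frobNorm A * (specNorm M * frobNorm B) :=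
        mul_le_mul_of_nonneg_left (frobNorm_mul_le M B) (Real.sqrt_nonneg _)
    _ = specNorm M * frobNorm A * frobNorm B := by ring

lemma frobSq_vecMulVec (a b : Fin d → ℝ) : frobSq (vecMulVec a b) = nsq a * nsq b := by
  simp only [frobSq, nsq, vecMulVec_apply, Finset.sum_mul_sum, mul_pow]

lemma vecMulVec_self_mul_self {v : Fin d → ℝ} (hv : nsq v = 1) :
    vecMulVec v v * vecMulVec v v = vecMulVec v v := by
  rw [vecMulVec_mul_vecMulVec, ← nsq_eq_dotProduct, hv, one_smul]

lemma finner_gradient_eq_of_orthProj {P X E Z : Matrix (Fin d) (Fin d) ℝ}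
    (Γ : Matrix (Fin d) (Fin d) ℝ)
    (hPP : P * P = P) (hPT : Pᵀ = P) (hE : E = (1 - P) * X) (hZ : Z = P * X) :
    finner E ((X * Xᵀ - P - Γ) * X) =
      frobSq (Eᵀ * E) + frobSq (E * Zᵀ) - finner E (Γ * E) - finner (E * Zᵀ) (Γ * P) := by
  have hEP : Eᵀ * P = 0 := by
    rw [hE, transpose_mul, Matrix.transpose_sub, transpose_one, hPT, mul_assoc, sub_mul, one_mul,
      hPP, sub_self, mul_zero]
  have hEZ : Eᵀ * Z = 0 := by rw [hZ, ← mul_assoc, hEP, zero_mul]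
  have hZE : Zᵀ * E = 0 := by rw [← transpose_transpose E, ← transpose_mul, hEZ, transpose_zero]
  have hX : X = Z + E := by rw [hE, hZ, sub_mul, one_mul, add_sub_cancel]
  have hPZ : P * Z = Z := by rw [hZ, ← mul_assoc, hPP]
  have hEX : Eᵀ * X = Eᵀ * E := by rw [hX, mul_add, hEZ, zero_add]
  have hXX : Xᵀ * X = Zᵀ * Z + Eᵀ * E := by
    rw [hX, transpose_add, add_mul, mul_add, mul_add, hEZ, hZE]; abel
  have hEΓX : Eᵀ * Γ * X = Eᵀ * Γ * E + Eᵀ * Γ * P * Z := by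
    rw [mul_assoc _ P, hPZ, hX, mul_add, add_comm]
  have hexpand : Eᵀ * ((X * Xᵀ - P - Γ) * X) =
      Eᵀ * E * (Eᵀ * E) + Eᵀ * E * (Zᵀ * Z) - Eᵀ * (Γ * E) - Eᵀ * Γ * P * Z :=
    calc Eᵀ * ((X * Xᵀ - P - Γ) * X) = Eᵀ * X * (Xᵀ * X) - Eᵀ * P * X - Eᵀ * Γ * X := by
          noncomm_ring
      _ = _ := by rw [hEX, hXX, hEP, hEΓX]; noncomm_ring
  have hEEEE : trace (Eᵀ * E * (Eᵀ * E)) = frobSq (Eᵀ * E) := by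
    rw [← finner_self, finner, transpose_mul, transpose_transpose]
  have hEEZZ : trace (Eᵀ * E * (Zᵀ * Z)) = frobSq (E * Zᵀ) := by
    rw [← finner_self, finner, transpose_mul, transpose_transpose, mul_assoc Z, trace_mul_comm Z]
    simp only [Matrix.mul_assoc]
  have hEΓPZ : trace (Eᵀ * Γ * P * Z) = finner (E * Zᵀ) (Γ * P) := by
    rw [finner, transpose_mul, transpose_transpose, mul_assoc Z, trace_mul_comm Z]
    simp only [Matrix.mul_assoc]
  rw [finner, hexpand, trace_sub, trace_sub, trace_add, hEEEE, hEEZZ, hEΓPZ]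
  rfl

end

theorem stmt_3_general {d : ℕ} (xs : Fin d → ℝ) (hx : nsq xs = 1)
    (Γ : Matrix (Fin d) (Fin d) ℝ)
    (X : Matrix (Fin d) (Fin d) ℝ)
    (E Z : Matrix (Fin d) (Fin d) ℝ)
    (hE : E = (1 - Matrix.vecMulVec xs xs) * X)
    (hZ : Z = Matrix.vecMulVec xs (Xᵀ *ᵥ xs)) :
    finner E ((X * Xᵀ - Matrix.vecMulVec xs xs - Γ) * X) ≥
      -specNorm Γ * frobSq E + frobSq (E * Zᵀ) - specNorm Γ * frobNorm (E * Zᵀ) ∧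
    -specNorm Γ * frobSq E + frobSq (E * Zᵀ) - specNorm Γ * frobNorm (E * Zᵀ) ≥
      -specNorm Γ * frobSq E - (1 / 4) * (specNorm Γ) ^ 2 := by
  have hZP : Z = vecMulVec xs xs * X := by rw [hZ, vecMulVec_mul, mulVec_transpose]
  have hP : frobNorm (vecMulVec xs xs) = 1 := by
    rw [frobNorm, frobSq_vecMulVec, hx, mul_one, Real.sqrt_one]
  have hΓE := finner_mul_le E Γ E
  have hΓP := finner_mul_le (E * Zᵀ) Γ (vecMulVec xs xs)
  rw [hP, mul_one] at hΓP
  rw [mul_assoc, ← sq, frobNorm_sq] at hΓE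
  rw [finner_gradient_eq_of_orthProj Γ (vecMulVec_self_mul_self hx) (transpose_vecMulVec xs xs)
    hE hZP]
  refine ⟨by linarith [frobSq_nonneg (Eᵀ * E)], ?_⟩
  nlinarith [frobNorm_sq (E * Zᵀ), sq_nonneg (frobNorm (E * Zᵀ) - specNorm Γ / 2)]

theorem stmt_3 {d : ℕ} (xs : Fin d → ℝ) (hx : nsq xs = 1)
    (Γ : Matrix (Fin d) (Fin d) ℝ) (hΓ : Γᵀ = Γ)
    (X : Matrix (Fin d) (Fin d) ℝ)
    (E Z : Matrix (Fin d) (Fin d) ℝ)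
    (hE : E = (1 - Matrix.vecMulVec xs xs) * X)
    (hZ : Z = Matrix.vecMulVec xs (Xᵀ *ᵥ xs)) :
    finner E ((X * Xᵀ - Matrix.vecMulVec xs xs - Γ) * X) ≥
      -specNorm Γ * frobSq E + frobSq (E * Zᵀ) - specNorm Γ * frobNorm (E * Zᵀ) ∧
    -specNorm Γ * frobSq E + frobSq (E * Zᵀ) - specNorm Γ * frobNorm (E * Zᵀ) ≥
      -specNorm Γ * frobSq E - (1 / 4) * (specNorm Γ) ^ 2 :=
  stmt_3_general xs hx Γ X E Z hE hZ
end

section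
/- Let $x^* \in \mathbb{R}^d$ be a unit vector, $\Gamma_{\mathrm{sym}}$ symmetric, $X \in \mathbb{R}^{d\times d}$, $r = X^\top x^*$, $E = (\mathrm{Id} - x^* x^{*\top})X$, and set $a = 1 + x^{*\top}\Gamma_{\mathrm{sym}} x^*$. If $\|r\|_2^2 \ge a$, then $\langle r, X^\top(XX^\top - x^* x^{*\top} - \Gamma_{\mathrm{sym}})x^* \rangle \ge \|r\|_2^2(\|r\|_2^2 - a) - \frac{1}{4}\|\Gamma_{\mathrm{sym}} x^*\|_2^2$. -/
open Matrix MeasureTheory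

theorem stmt_17 {d : ℕ} (xs : Fin d → ℝ) (hx : nsq xs = 1)
    (Γ : Matrix (Fin d) (Fin d) ℝ) (hΓ : Γᵀ = Γ)
    (X : Matrix (Fin d) (Fin d) ℝ)
    (r : Fin d → ℝ) (hr : r = Xᵀ *ᵥ xs)
    (E : Matrix (Fin d) (Fin d) ℝ)
    (hE : E = (1 - Matrix.vecMulVec xs xs) * X)
    (a : ℝ) (ha : a = 1 + xs ⬝ᵥ (Γ *ᵥ xs))
    (hra : nsq r ≥ a) :
    r ⬝ᵥ (Xᵀ *ᵥ ((X * Xᵀ - Matrix.vecMulVec xs xs - Γ) *ᵥ xs)) ≥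
      nsq r * (nsq r - a) - (1 / 4) * nsq (Γ *ᵥ xs) := by
  have hdot : ∀ v : Fin d → ℝ, nsq v = v ⬝ᵥ v := by
    intro v; simp [nsq, dotProduct, sq]
  subst hr hE ha
  set w := Xᵀ *ᵥ xs with hw
  set u := X *ᵥ w with hu
  set g := Γ *ᵥ xs with hg
  have hxx : xs ⬝ᵥ xs = 1 := by rw [← hdot]; exact hx
  have hvv : Matrix.vecMulVec xs xs *ᵥ xs = xs := by
    ext i
    simp [Matrix.mulVec, Matrix.vecMulVec_apply, dotProduct, Finset.mul_sum]
    simp only [mul_assoc, ← Finset.mul_sum]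
    rw [show ∑ x, xs x * xs x = xs ⬝ᵥ xs from rfl, hxx, mul_one]
  have hz : (X * Xᵀ - Matrix.vecMulVec xs xs - Γ) *ᵥ xs = u - xs - g := by
    rw [Matrix.sub_mulVec, Matrix.sub_mulVec, hvv, ← Matrix.mulVec_mulVec]
  have hlhs : w ⬝ᵥ (Xᵀ *ᵥ ((X * Xᵀ - Matrix.vecMulVec xs xs - Γ) *ᵥ xs))
      = u ⬝ᵥ u - u ⬝ᵥ xs - u ⬝ᵥ g := by
    rw [hz, Matrix.dotProduct_mulVec, Matrix.vecMul_transpose, ← hu,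
      dotProduct_sub, dotProduct_sub]
  have hux : u ⬝ᵥ xs = w ⬝ᵥ w := by
    rw [hu, dotProduct_comm, Matrix.dotProduct_mulVec, ← Matrix.mulVec_transpose, ← hw]
  have key : (0:ℝ) ≤ nsq (u - (w ⬝ᵥ w) • xs - (1/2 : ℝ) • g) := by
    unfold nsq; positivity
  rw [hdot] at key
  have hexp : (u - (w ⬝ᵥ w) • xs - (1/2 : ℝ) • g) ⬝ᵥ (u - (w ⬝ᵥ w) • xs - (1/2 : ℝ) • g)
      = u ⬝ᵥ u + (w ⬝ᵥ w)^2 * (xs ⬝ᵥ xs) + (1/4) * (g ⬝ᵥ g)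
        - 2 * (w ⬝ᵥ w) * (u ⬝ᵥ xs) - (u ⬝ᵥ g) + (w ⬝ᵥ w) * (xs ⬝ᵥ g) := by
    simp only [dotProduct_sub, sub_dotProduct, dotProduct_smul, smul_dotProduct,
      smul_eq_mul]
    rw [dotProduct_comm xs u, dotProduct_comm g u, dotProduct_comm g xs]
    ring
  rw [hexp, hxx, hux] at key
  rw [hlhs, hdot, hdot, hux]
  nlinarith [key]
end
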